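/- Let a, b, c ∈ ℝ³ be such that (b − a) × (c − a) ≠ 0, and let v = α(b − a) + β(c − a) be any vector in the plane of the triangle (α, β ∈ ℝ). Define the unit normal of the perturbed triangle by n(t) = w(t)/‖w(t)‖ where w(t) = (b − (a + t v)) × (c − (a + t v)). Then n is differentiable at t = 0 and its derivative at t = 0 is the zero vector; i.e., the unit normal of a triangle is invariant to first order under in-plane displacement of a vertex. -/

import Mathlib

open Matrix Filter Topology

/-! Moving a vertex by `t • v` with `v = α • (b - a) + β • (c - a)` multiplies the edge cross
product by the scalar `1 - t * (α + β)`, which is positive near `t = 0`. Normalization forgets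
positive scalars, so the unit normal is constant near `t = 0`. -/

noncomputable def unitNormalize {n : Type*} [Fintype n] (w : n → ℝ) : n → ℝ :=
  (√(w ⬝ᵥ w))⁻¹ • w

theorem unitNormalize_smul_of_pos {n : Type*} [Fintype n] {r : ℝ} (hr : 0 < r) (w : n → ℝ) :
    unitNormalize (r • w) = unitNormalize w := by
  have hdot : (r • w) ⬝ᵥ (r • w) = r ^ 2 * (w ⬝ᵥ w) := by
    simp only [smul_dotProduct, dotProduct_smul, smul_eq_mul]; ring
  rw [unitNormalize, unitNormalize, hdot, Real.sqrt_mul (sq_nonneg r), Real.sqrt_sq hr.le,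
    smul_smul, mul_inv, mul_right_comm, inv_mul_cancel₀ hr.ne', one_mul]

theorem cross_sub_smul_in_plane (u s : Fin 3 → ℝ) (α β t : ℝ) :
    (u - t • (α • u + β • s)) ⨯₃ (s - t • (α • u + β • s)) = (1 - t * (α + β)) • (u ⨯₃ s) := by
  simp only [map_sub, map_add, map_smul, LinearMap.sub_apply, LinearMap.add_apply,
    LinearMap.smul_apply, cross_self, ← cross_anticomm u s]
  module

theorem unit_normal_first_order_invariant_general (a b c v : Fin 3 → ℝ) (α β : ℝ)
    (hv : v = α • (b - a) + β • (c - a)) :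
    HasDerivAt
      (fun t : ℝ =>
        (Real.sqrt (((b - (a + t • v)) ⨯₃ (c - (a + t • v))) ⬝ᵥ
            ((b - (a + t • v)) ⨯₃ (c - (a + t • v)))))⁻¹ •
          ((b - (a + t • v)) ⨯₃ (c - (a + t • v))))
      (0 : Fin 3 → ℝ) 0 := by
  have hplane (t : ℝ) : (b - (a + t • v)) ⨯₃ (c - (a + t • v)) =
      (1 - t * (α + β)) • ((b - a) ⨯₃ (c - a)) := by
    rw [hv, sub_add_eq_sub_sub, sub_add_eq_sub_sub, cross_sub_smul_in_plane]
  have hpos : ∀ᶠ t in 𝓝 (0 : ℝ), 0 < 1 - t * (α + β) :=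
    continuousAt_const.eventually_lt (by fun_prop) (by simp)
  refine (hasDerivAt_const (0 : ℝ) (unitNormalize ((b - a) ⨯₃ (c - a)))).congr_of_eventuallyEq ?_
  filter_upwards [hpos] with t ht
  change unitNormalize _ = _
  rw [hplane, unitNormalize_smul_of_pos ht]

/-- The unit normal of a triangle is invariant to first order under in-plane
displacement of a vertex: if `(b − a) × (c − a) ≠ 0` and `v = α(b − a) + β(c − a)`
is any vector in the plane of the triangle, then the unit normal
`n(t) = w(t)/‖w(t)‖` of the perturbed triangle, where
`w(t) = (b − (a + t v)) × (c − (a + t v))`, is differentiable at `t = 0` with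
derivative zero. -/
theorem unit_normal_first_order_invariant (a b c v : Fin 3 → ℝ) (α β : ℝ)
    (hv : v = α • (b - a) + β • (c - a))
    (hw : (b - a) ⨯₃ (c - a) ≠ 0) :
    HasDerivAt
      (fun t : ℝ =>
        (Real.sqrt (((b - (a + t • v)) ⨯₃ (c - (a + t • v))) ⬝ᵥ
            ((b - (a + t • v)) ⨯₃ (c - (a + t • v)))))⁻¹ •
          ((b - (a + t • v)) ⨯₃ (c - (a + t • v))))
      (0 : Fin 3 → ℝ) 0 :=
  unit_normal_first_order_invariant_general a b c v α β hv
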